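/- arXiv:math/0505332 — 2 statements merged into one kernel-verified Lean document; each statement's English description precedes it below -/
import Mathlib

section
/- For every real x > 0, every real b with 0 < b < 1, and all integers m ≥ 0 and n ≥ 0: P(V^#_n ≤ x and max_{0≤k≤n} S_k ≤ b·x) ≥ P(V^#_m ≤ b·x and min_{0≤k≤m} S_k ≤ (b−1)·x) · P(V^#_n ≤ x). -/
open MeasureTheory ProbabilityTheory Filter

noncomputable section

/-- The random walk `S_n = ξ₁ + ⋯ + ξ_n` associated with the steps `ξ`. -/
def walk {Ω : Type*} (ξ : ℕ → Ω → ℝ) (n : ℕ) (ω : Ω) : ℝ :=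
  ∑ i ∈ Finset.range n, ξ i ω

/-- `max_{0 ≤ k ≤ n} S_k`. -/
def walkMax {Ω : Type*} (ξ : ℕ → Ω → ℝ) (n : ℕ) (ω : Ω) : ℝ :=
  (Finset.range (n + 1)).sup' Finset.nonempty_range_add_one fun k => walk ξ k ω

/-- `min_{0 ≤ k ≤ n} S_k`. -/
def walkMin {Ω : Type*} (ξ : ℕ → Ω → ℝ) (n : ℕ) (ω : Ω) : ℝ :=
  (Finset.range (n + 1)).inf' Finset.nonempty_range_add_one fun k => walk ξ k ω

/-- `V^#_n = max_{0 ≤ u ≤ v ≤ n} (S_v - S_u)`, the supremum of the reflected walk. -/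
def reflMax {Ω : Type*} (ξ : ℕ → Ω → ℝ) (n : ℕ) (ω : Ω) : ℝ :=
  (Finset.range (n + 1)).sup' Finset.nonempty_range_add_one fun v =>
    (Finset.range (v + 1)).sup' Finset.nonempty_range_add_one fun u =>
      walk ξ v ω - walk ξ u ω

/-!
Split the event `{V^#_m ≤ b x, min_{k ≤ m} S_k ≤ (b - 1) x}` according to the first time
`k ≤ m` at which the walk drops to `(b - 1) x`. If moreover the restarted walk `S_{k+·} - S_k`
has oscillation at most `x` during `n` steps, then, `S_k` being a running minimum, the whole
path up to time `k + n ≥ n` has oscillation at most `x` and stays below `(b - 1) x + x = b x`.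
The restarted condition is independent of the first `k` steps and, the steps being i.i.d., has
probability `P(V^#_n ≤ x)`; summing over the disjoint first-passage events gives the bound.
-/

section RandomWalk

variable {Ω : Type*} {ξ : ℕ → Ω → ℝ} {ω : Ω}

lemma walk_zero : walk ξ 0 ω = 0 := by simp [walk]

lemma walk_add (k j : ℕ) :
    walk ξ (k + j) ω = walk ξ k ω + walk (fun i => ξ (k + i)) j ω :=
  Finset.sum_range_add _ k j

lemma reflMax_le_iff {n : ℕ} {y : ℝ} :
    reflMax ξ n ω ≤ y ↔ ∀ v ≤ n, ∀ u ≤ v, walk ξ v ω - walk ξ u ω ≤ y := by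
  simp [reflMax, Finset.sup'_le_iff]

lemma walkMax_le_iff {n : ℕ} {y : ℝ} : walkMax ξ n ω ≤ y ↔ ∀ v ≤ n, walk ξ v ω ≤ y := by
  simp [walkMax, Finset.sup'_le_iff]

lemma walkMin_le_iff {n : ℕ} {c : ℝ} : walkMin ξ n ω ≤ c ↔ ∃ v ≤ n, walk ξ v ω ≤ c := by
  simp [walkMin, Finset.inf'_le_iff]

lemma walk_sub_walk_le_reflMax {n u v : ℕ} (hv : v ≤ n) (hu : u ≤ v) :
    walk ξ v ω - walk ξ u ω ≤ reflMax ξ n ω :=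
  reflMax_le_iff.1 le_rfl v hv u hu

lemma walk_le_walkMax {n v : ℕ} (hv : v ≤ n) : walk ξ v ω ≤ walkMax ξ n ω :=
  walkMax_le_iff.1 le_rfl v hv

lemma reflMax_mono {n N : ℕ} (h : n ≤ N) : reflMax ξ n ω ≤ reflMax ξ N ω :=
  reflMax_le_iff.2 fun _ hv _ hu => walk_sub_walk_le_reflMax (hv.trans h) hu

lemma walkMax_mono {n N : ℕ} (h : n ≤ N) : walkMax ξ n ω ≤ walkMax ξ N ω :=
  walkMax_le_iff.2 fun _ hv => walk_le_walkMax (hv.trans h)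

lemma walkMax_le_reflMax (n : ℕ) : walkMax ξ n ω ≤ reflMax ξ n ω :=
  walkMax_le_iff.2 fun v hv => by
    simpa [walk_zero] using walk_sub_walk_le_reflMax (ξ := ξ) (ω := ω) hv (Nat.zero_le v)

/-- Concatenation at a running minimum: an increment across time `k` splits as
`(S_v - S_k) + (S_k - S_u)` with the second term `≤ 0`. -/
lemma reflMax_add_le {k n : ℕ} {x : ℝ} (hk : reflMax ξ k ω ≤ x)
    (hn : reflMax (fun i => ξ (k + i)) n ω ≤ x) (hmin : ∀ u ≤ k, walk ξ k ω ≤ walk ξ u ω) :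
    reflMax ξ (k + n) ω ≤ x := by
  refine reflMax_le_iff.2 fun v hv u hu => ?_
  rcases le_or_gt v k with hvk | hkv
  · exact (walk_sub_walk_le_reflMax hvk hu).trans hk
  obtain ⟨j, rfl⟩ := Nat.exists_eq_add_of_le hkv.le
  have hj : j ≤ n := by omega
  rw [walk_add]
  rcases le_or_gt u k with huk | hku
  · have := walk_sub_walk_le_reflMax (ξ := fun i => ξ (k + i)) (ω := ω) hj (Nat.zero_le j)
    rw [walk_zero] at this
    linarith [hmin u huk]
  · obtain ⟨i, rfl⟩ := Nat.exists_eq_add_of_le hku.le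
    rw [walk_add]
    linarith [walk_sub_walk_le_reflMax (ξ := fun i => ξ (k + i)) (ω := ω) hj
      (show i ≤ j by omega)]

lemma walkMax_add_le {k n : ℕ} {y : ℝ} (hk : walkMax ξ k ω ≤ y)
    (hn : walk ξ k ω + walkMax (fun i => ξ (k + i)) n ω ≤ y) : walkMax ξ (k + n) ω ≤ y := by
  refine walkMax_le_iff.2 fun v hv => ?_
  rcases le_or_gt v k with hvk | hkv
  · exact (walk_le_walkMax hvk).trans hk
  obtain ⟨j, rfl⟩ := Nat.exists_eq_add_of_le hkv.le
  rw [walk_add]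
  linarith [walk_le_walkMax (ξ := fun i => ξ (k + i)) (ω := ω) (show j ≤ n by omega)]

def firstPassageBelow (ξ : ℕ → Ω → ℝ) (c : ℝ) (k : ℕ) : Set Ω :=
  {ω | walk ξ k ω ≤ c ∧ ∀ j < k, c < walk ξ j ω}

lemma walk_le_of_mem_firstPassageBelow {c : ℝ} {k u : ℕ} (h : ω ∈ firstPassageBelow ξ c k)
    (hu : u ≤ k) : walk ξ k ω ≤ walk ξ u ω := by
  rcases hu.lt_or_eq with hu | rfl
  · exact h.1.trans (h.2 u hu).le
  · exact le_rfl

open Function in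
lemma pairwise_disjoint_firstPassageBelow (c : ℝ) :
    Pairwise (Disjoint on firstPassageBelow ξ c) := by
  intro k l hkl
  refine Set.disjoint_left.2 fun ω hk hl => ?_
  rcases hkl.lt_or_gt with h | h
  · exact (hl.2 k h).not_ge hk.1
  · exact (hk.2 l h).not_ge hl.1

lemma walkMin_le_iff_exists_firstPassageBelow {m : ℕ} {c : ℝ} :
    walkMin ξ m ω ≤ c ↔ ∃ k ≤ m, ω ∈ firstPassageBelow ξ c k := by
  classical
  refine ⟨fun h => ?_, fun ⟨k, hk, hpass⟩ => walkMin_le_iff.2 ⟨k, hk, hpass.1⟩⟩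
  obtain ⟨v, hv, hvc⟩ := walkMin_le_iff.1 h
  have hex : ∃ u, walk ξ u ω ≤ c := ⟨v, hvc⟩
  exact ⟨Nat.find hex, (Nat.find_min' hex hvc).trans hv, Nat.find_spec hex,
    fun j hj => lt_of_not_ge (Nat.find_min hex hj)⟩

lemma subset_iUnion_firstPassageBelow {m : ℕ} {c y : ℝ} :
    {ω | reflMax ξ m ω ≤ y ∧ walkMin ξ m ω ≤ c} ⊆
      ⋃ k ∈ Finset.range (m + 1), {ω | reflMax ξ k ω ≤ y} ∩ firstPassageBelow ξ c k := by
  rintro ω ⟨hrefl, hmin⟩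
  obtain ⟨k, hk, hpass⟩ := walkMin_le_iff_exists_firstPassageBelow.1 hmin
  exact Set.mem_biUnion (Finset.mem_range_succ_iff.2 hk)
    ⟨(reflMax_mono hk).trans hrefl, hpass⟩

/-- After the first passage time `k` the walk stays below `S_k + x ≤ c + x ≤ y`, and since
`S_k` is a running minimum its oscillation up to time `k + n ≥ n` stays `≤ x`. -/
lemma firstPassageBelow_inter_shift_subset {c x y : ℝ} (hyx : y ≤ x) (hcy : c + x ≤ y)
    (k n : ℕ) :
    {ω | reflMax ξ k ω ≤ y} ∩ firstPassageBelow ξ c k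
        ∩ {ω | reflMax (fun i => ξ (k + i)) n ω ≤ x}
      ⊆ {ω | reflMax ξ n ω ≤ x ∧ walkMax ξ n ω ≤ y} := by
  rintro ω ⟨⟨hk, hpass⟩, hshift⟩
  have hle : n ≤ k + n := Nat.le_add_left n k
  refine ⟨(reflMax_mono hle).trans (reflMax_add_le (hk.trans hyx) hshift
      fun u hu => walk_le_of_mem_firstPassageBelow hpass hu),
    (walkMax_mono hle).trans (walkMax_add_le ((walkMax_le_reflMax k).trans hk) ?_)⟩
  linarith [hpass.1, (walkMax_le_reflMax (ξ := fun i => ξ (k + i)) (ω := ω) n).trans hshift]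

section Measurability

variable {m : MeasurableSpace Ω}

lemma measurable_walk {n : ℕ} (h : ∀ i < n, Measurable[m] (ξ i)) :
    Measurable[m] (walk ξ n) :=
  Finset.measurable_fun_sum _ fun i hi => h i (Finset.mem_range.1 hi)

lemma measurable_reflMax {n : ℕ} (h : ∀ i < n, Measurable[m] (ξ i)) :
    Measurable[m] (reflMax ξ n) :=
  Finset.measurable_range_sup'' fun v hv => Finset.measurable_range_sup'' fun u hu =>
    (measurable_walk fun i hi => h i (by omega)).sub (measurable_walk fun i hi => h i (by omega))

lemma measurableSet_firstPassageBelow {k : ℕ} (c : ℝ) (h : ∀ i < k, Measurable[m] (ξ i)) :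
    MeasurableSet[m] (firstPassageBelow ξ c k) := by
  have hwalk : ∀ j ≤ k, Measurable[m] (walk ξ j) := fun j hj =>
    measurable_walk fun i hi => h i (by omega)
  have : firstPassageBelow ξ c k =
      {ω | walk ξ k ω ≤ c} ∩ ⋂ j ∈ Finset.range k, {ω | c < walk ξ j ω} := by
    ext; simp [firstPassageBelow]
  rw [this]
  exact (measurableSet_le (hwalk k le_rfl) measurable_const).inter
    (Finset.measurableSet_biInter _ fun j hj =>
      measurableSet_lt measurable_const (hwalk j (Finset.mem_range.1 hj).le))

lemma measurable_of_mem_iSup_comap {ι β : Type*} [MeasurableSpace β] (X : ι → Ω → β)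
    {s : Set ι} {i : ι} (hi : i ∈ s) :
    Measurable[⨆ j ∈ s, MeasurableSpace.comap (X j) inferInstance] (X i) :=
  Measurable.of_comap_le <|
    le_iSup₂ (f := fun j (_ : j ∈ s) => MeasurableSpace.comap (X j) inferInstance) i hi

end Measurability

section Probability

variable [MeasurableSpace Ω] {P : Measure Ω}

lemma ProbabilityTheory.iIndepFun.measure_inter_eq_mul_of_Iio_Ici
    (hmeas : ∀ i, Measurable (ξ i)) (hindep : iIndepFun ξ P) {k : ℕ} {A B : Set Ω}
    (hA : MeasurableSet[⨆ i ∈ Set.Iio k, MeasurableSpace.comap (ξ i) inferInstance] A)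
    (hB : MeasurableSet[⨆ i ∈ Set.Ici k, MeasurableSpace.comap (ξ i) inferInstance] B) :
    P (A ∩ B) = P A * P B :=
  (Indep_iff _ _ P).1 (indep_iSup_of_disjoint (fun i => (hmeas i).comap_le)
    ((iIndepFun_iff_iIndep _ _ _).1 hindep) (Set.Iio_disjoint_Ici le_rfl)) A B hA hB

lemma ProbabilityTheory.iIndepFun.identDistrib_shift [IsProbabilityMeasure P]
    (hmeas : ∀ i, Measurable (ξ i)) (hindep : iIndepFun ξ P)
    (hident : ∀ i, IdentDistrib (ξ i) (ξ 0) P P) (k : ℕ) :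
    IdentDistrib (fun ω i => ξ (k + i) ω) (fun ω i => ξ i ω) P P where
  aemeasurable_fst := (measurable_pi_lambda _ fun i => hmeas (k + i)).aemeasurable
  aemeasurable_snd := (measurable_pi_lambda _ hmeas).aemeasurable
  map_eq := by
    rw [(hindep.precomp (add_right_injective k)).map_fun_eq_infinitePi_map fun i => hmeas _,
      hindep.map_fun_eq_infinitePi_map hmeas]
    congr with i : 1
    rw [(hident _).map_eq, (hident i).map_eq]

lemma measure_reflMax_shift_le_eq [IsProbabilityMeasure P] (hmeas : ∀ i, Measurable (ξ i))
    (hindep : iIndepFun ξ P) (hident : ∀ i, IdentDistrib (ξ i) (ξ 0) P P) (k n : ℕ) (x : ℝ) :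
    P {ω | reflMax (fun i => ξ (k + i)) n ω ≤ x} = P {ω | reflMax ξ n ω ≤ x} :=
  -- `reflMax (fun i g => g i) n` at the path `fun i => ξ (k + i) ω` unfolds to the left side
  ((hindep.identDistrib_shift hmeas hident k).comp
    (measurable_reflMax (ξ := fun i (g : ℕ → ℝ) => g i) fun i _ => measurable_pi_apply i)
    ).measure_mem_eq measurableSet_Iic

lemma measure_firstPassageBelow_inter_shift [IsProbabilityMeasure P]
    (hmeas : ∀ i, Measurable (ξ i)) (hindep : iIndepFun ξ P)
    (hident : ∀ i, IdentDistrib (ξ i) (ξ 0) P P) (c x y : ℝ) (k n : ℕ) :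
    P ({ω | reflMax ξ k ω ≤ y} ∩ firstPassageBelow ξ c k
        ∩ {ω | reflMax (fun i => ξ (k + i)) n ω ≤ x})
      = P ({ω | reflMax ξ k ω ≤ y} ∩ firstPassageBelow ξ c k) * P {ω | reflMax ξ n ω ≤ x} := by
  rw [← measure_reflMax_shift_le_eq hmeas hindep hident k n x]
  refine hindep.measure_inter_eq_mul_of_Iio_Ici hmeas (k := k) ?_ ?_
  · have hpast : ∀ i < k,
        Measurable[⨆ j ∈ Set.Iio k, MeasurableSpace.comap (ξ j) inferInstance] (ξ i) :=
      fun i hi => measurable_of_mem_iSup_comap ξ (Set.mem_Iio.2 hi)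
    exact (measurableSet_le (measurable_reflMax hpast) measurable_const).inter
      (measurableSet_firstPassageBelow c hpast)
  · exact measurableSet_le (measurable_reflMax fun i _ =>
      measurable_of_mem_iSup_comap ξ (Set.mem_Ici.2 (Nat.le_add_right k i))) measurable_const

end Probability

end RandomWalk

theorem reflMax_with_max_constraint_lower_bound_general
    {Ω : Type*} [MeasurableSpace Ω] (P : Measure Ω) [IsProbabilityMeasure P]
    (ξ : ℕ → Ω → ℝ) (hmeas : ∀ i, Measurable (ξ i))
    (hindep : iIndepFun ξ P)
    (hident : ∀ i, IdentDistrib (ξ i) (ξ 0) P P)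
    (x b : ℝ) (hx : 0 < x) (hb1 : b < 1) (m n : ℕ) :
    (P {ω | reflMax ξ m ω ≤ b * x ∧ walkMin ξ m ω ≤ (b - 1) * x}).toReal
        * (P {ω | reflMax ξ n ω ≤ x}).toReal
      ≤ (P {ω | reflMax ξ n ω ≤ x ∧ walkMax ξ n ω ≤ b * x}).toReal := by
  set E : ℕ → Set Ω := fun k =>
    {ω | reflMax ξ k ω ≤ b * x} ∩ firstPassageBelow ξ ((b - 1) * x) k
  set F : ℕ → Set Ω := fun k => {ω | reflMax (fun i => ξ (k + i)) n ω ≤ x}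
  have hEF : ∀ k, MeasurableSet (E k ∩ F k) := fun k =>
    ((measurableSet_le (measurable_reflMax fun i _ => hmeas i) measurable_const).inter
      (measurableSet_firstPassageBelow _ fun i _ => hmeas i)).inter
    (measurableSet_le (measurable_reflMax fun i _ => hmeas (k + i)) measurable_const)
  rw [← ENNReal.toReal_mul]
  refine ENNReal.toReal_mono (measure_ne_top _ _) ?_
  calc _ ≤ (∑ k ∈ Finset.range (m + 1), P (E k)) * P {ω | reflMax ξ n ω ≤ x} := by
        gcongr
        exact (measure_mono subset_iUnion_firstPassageBelow).trans (measure_biUnion_finset_le _ _)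
    _ = ∑ k ∈ Finset.range (m + 1), P (E k ∩ F k) := by
        simp only [Finset.sum_mul, E, F,
          measure_firstPassageBelow_inter_shift hmeas hindep hident]
    _ = P (⋃ k ∈ Finset.range (m + 1), E k ∩ F k) :=
        (measure_biUnion_finset (fun k _ l _ hkl =>
          (pairwise_disjoint_firstPassageBelow _ hkl).mono (fun _ h => h.1.2) fun _ h => h.1.2)
          fun k _ => hEF k).symm
    _ ≤ _ := measure_mono <| Set.iUnion₂_subset fun k _ =>
        firstPassageBelow_inter_shift_subset (by nlinarith) (by linarith) k n

/-- For every `x > 0`, `0 < b < 1` and integers `m, n ≥ 0`: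
`P(V^#_n ≤ x, max_{0≤k≤n} S_k ≤ b·x)
  ≥ P(V^#_m ≤ b·x, min_{0≤k≤m} S_k ≤ (b-1)·x) ⬝ P(V^#_n ≤ x)`. -/
theorem reflMax_with_max_constraint_lower_bound
    {Ω : Type*} [MeasurableSpace Ω] (P : Measure Ω) [IsProbabilityMeasure P]
    (ξ : ℕ → Ω → ℝ) (hmeas : ∀ i, Measurable (ξ i))
    (hindep : iIndepFun ξ P)
    (hident : ∀ i, IdentDistrib (ξ i) (ξ 0) P P)
    (x b : ℝ) (hx : 0 < x) (hb0 : 0 < b) (hb1 : b < 1) (m n : ℕ) :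
    (P {ω | reflMax ξ m ω ≤ b * x ∧ walkMin ξ m ω ≤ (b - 1) * x}).toReal
        * (P {ω | reflMax ξ n ω ≤ x}).toReal
      ≤ (P {ω | reflMax ξ n ω ≤ x ∧ walkMax ξ n ω ≤ b * x}).toReal :=
  reflMax_with_max_constraint_lower_bound_general P ξ hmeas hindep hident x b hx hb1 m n
end
end

section
/- Let a : [1,∞) → [1,∞) be a continuous, strictly increasing, unbounded function with a(1) = 1 whose inverse a⁻¹ is regularly varying at infinity with index α > 0, and let g : [1,∞) → (0,∞) be a nondecreasing function which is regularly varying at infinity with index q ∈ (0,1]. For x > 0 and y > 0 let Λ(x,y) denote the event that the walk (S_k)_{k≥0} enters (y,∞) strictly before it enters (−∞,−x). Assume: (i) there exist a constant C₁ and thresholds x₀ ≥ 1, r₀ ≥ 1 such that for all x ≥ x₀ and all y with y/x ≥ r₀: P(Λ(x,y)) ≤ C₁·g(a⁻¹(x))/g(a⁻¹(x+y)); (ii) there exist a constant K > 0 and thresholds z₀ ≥ 1, s₀ ≥ 1 such that for every real z ≥ z₀ and every integer n with n/a⁻¹(z) ≥ s₀: P(V^#_n ≤ z) ≤ exp(−K·n/a⁻¹(z)).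 Then for every δ with 0 < δ < q there is a constant C_δ such that for all integers n ≥ 1 and all reals x ≥ 1: P(min_{0≤k≤n} S_k ≥ −x) ≤ C_δ·(a⁻¹(x)/n)^δ. -/
open MeasureTheory ProbabilityTheory Filter

noncomputable section

/-- `Λ(x,y)`: the walk enters `(y,∞)` strictly before it enters `(-∞,-x)`. -/
def hitsAboveBeforeBelow {Ω : Type*} (ξ : ℕ → Ω → ℝ) (x y : ℝ) : Set Ω :=
  {ω | ∃ k : ℕ, y < walk ξ k ω ∧ ∀ j ≤ k, -x ≤ walk ξ j ω}

/-!
If the walk stays above `-x` up to time `n`, then for every level `z` it either exceeds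
`z - x` before dropping below `-x`, or its reflected maximum up to time `n` is at most `z`.
Fix `δ < p < q`, put `R = n / a⁻¹(x)` and `θ = δ / p`, and take `z = a(t)` at the time scale
`t = a⁻¹(x) R^θ`. Hypothesis (i) and Potter's bound `g(u) ≤ C (u/t)^p g(t)` make the first
probability `O((a⁻¹(x)/t)^p) = O(R^(-δ))`, while (ii) makes the second at most
`exp(-K R^(1-θ)) ≤ R^(-δ)` once `R` is large; for bounded `R` the trivial bound `1` suffices.
-/

open Set

lemma StrictMonoOn.monotoneOn_of_rightInvOn {α β : Type*} [LinearOrder α] [Preorder β]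
    {f : α → β} {g : β → α} {s : Set α} {t : Set β} (hf : StrictMonoOn f s) (hg : MapsTo g t s)
    (hfg : RightInvOn g f t) : MonotoneOn g t := fun y hy z hz hyz => by
  rwa [← hf.le_iff_le (hg hy) (hg hz), hfg hy, hfg hz]

lemma le_rpow_mul_of_doubling {g : ℝ → ℝ} {X l p : ℝ} (hX : 0 < X) (hl : 1 < l) (hp : 0 ≤ p)
    (hg : MonotoneOn g (Ici X)) (hg0 : ∀ x, X ≤ x → 0 ≤ g x)
    (hdbl : ∀ x, X ≤ x → l ^ p * g x ≤ g (l * x)) {u v : ℝ} (hu : X ≤ u) (huv : u ≤ v) :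
    g u ≤ (l * u / v) ^ p * g v := by
  have hnear : ∀ u, X ≤ u → u ≤ v → v ≤ l * u → g u ≤ (l * u / v) ^ p * g v := by
    intro u hu huv hvu
    have hv : 0 < v := hX.trans_le (hu.trans huv)
    calc g u ≤ g v := hg hu (hu.trans huv) huv
      _ ≤ (l * u / v) ^ p * g v :=
        le_mul_of_one_le_left (hg0 v (hu.trans huv)) (Real.one_le_rpow ((one_le_div hv).2 hvu) hp)
  suffices ∀ k : ℕ, ∀ u, X ≤ u → u ≤ v → v ≤ l ^ k * u → g u ≤ (l * u / v) ^ p * g v by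
    obtain ⟨k, hk⟩ := pow_unbounded_of_one_lt (v / u) hl
    exact this k u hu huv ((div_le_iff₀ (hX.trans_le hu)).1 hk.le)
  intro k
  induction k with
  | zero => exact fun u hu huv hvu => hnear u hu huv (by nlinarith)
  | succ k ih =>
    intro u hu huv hvu
    rcases le_or_gt v (l * u) with hvu' | hvu'
    · exact hnear u hu huv hvu'
    have hu0 : 0 < u := hX.trans_le hu
    have hv0 : 0 < v := hu0.trans_le huv
    have hlp : 0 < l ^ p := Real.rpow_pos_of_pos (by linarith) p
    have hlu : X ≤ l * u := hu.trans (le_mul_of_one_le_left hu0.le hl.le)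
    have key := (hdbl u hu).trans (ih (l * u) hlu hvu'.le (by rw [pow_succ] at hvu; linarith))
    rw [mul_div_assoc l, Real.mul_rpow (by linarith) (by positivity), mul_assoc] at key
    exact le_of_mul_le_mul_left key hlp

lemma exists_le_mul_rpow_mul_of_tendsto {g : ℝ → ℝ} {l q p : ℝ} (hl : 1 < l) (hp : 0 ≤ p)
    (hpq : p < q) (hg0 : ∀ x, 1 ≤ x → 0 < g x) (hg : MonotoneOn g (Ici 1))
    (hrv : Tendsto (fun x => g (l * x) / g x) atTop (nhds (l ^ q))) :
    ∃ C, 0 < C ∧ ∀ u v, 1 ≤ u → u ≤ v → g u ≤ C * (u / v) ^ p * g v := by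
  obtain ⟨X, hX⟩ := ((hrv.eventually_const_lt (Real.rpow_lt_rpow_of_exponent_lt hl hpq)).and
    (eventually_ge_atTop 1)).exists_forall_of_atTop
  set Y := max X 1
  have hY : 1 ≤ Y := le_max_right X 1
  have hdbl : ∀ x, Y ≤ x → l ^ p * g x ≤ g (l * x) := fun x hx =>
    ((lt_div_iff₀ (hg0 x (hY.trans hx))).1 (hX x ((le_max_left X 1).trans hx)).1).le
  refine ⟨(l * Y) ^ p, by positivity, fun u v hu huv => ?_⟩
  have hv : 0 < v := by linarith
  rw [← Real.mul_rpow (by positivity) (by positivity), mul_div_assoc', mul_assoc]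
  rcases le_or_gt (Y * u) v with hYu | hYu
  · calc g u ≤ g (Y * u) :=
        hg hu (one_le_mul_of_one_le_of_one_le hY hu) (le_mul_of_one_le_left (by linarith) hY)
      _ ≤ (l * (Y * u) / v) ^ p * g v :=
        le_rpow_mul_of_doubling (by linarith) hl hp (hg.mono (Ici_subset_Ici.2 hY))
          (fun x hx => (hg0 x (hY.trans hx)).le) hdbl (by nlinarith) hYu
  · have h1 : 1 ≤ l * (Y * u) / v := (one_le_div hv).2 (by nlinarith)
    calc g u ≤ g v := hg hu (hu.trans huv) huv
      _ ≤ (l * (Y * u) / v) ^ p * g v :=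
        le_mul_of_one_le_left (hg0 v (hu.trans huv)).le (Real.one_le_rpow h1 hp)

lemma exists_le_mul_of_tendsto_div {f : ℝ → ℝ} {c L : ℝ} (hc : 1 ≤ c)
    (hf0 : ∀ x, 1 ≤ x → 0 < f x) (hf : MonotoneOn f (Ici 1))
    (hrv : Tendsto (fun x => f (c * x) / f x) atTop (nhds L)) :
    ∃ C, 0 < C ∧ ∀ x, 1 ≤ x → f (c * x) ≤ C * f x := by
  obtain ⟨X, hX⟩ := ((hrv.eventually_lt_const (lt_add_one L)).and
    (eventually_ge_atTop 1)).exists_forall_of_atTop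
  have h1X : 1 ≤ X := (hX X le_rfl).2
  have hcX : 1 ≤ c * X := one_le_mul_of_one_le_of_one_le hc h1X
  refine ⟨max (L + 1) (f (c * X) / f 1),
    lt_max_of_lt_right (div_pos (hf0 _ hcX) (hf0 1 le_rfl)), fun x hx => ?_⟩
  have hfx := hf0 x hx
  rcases le_total X x with hXx | hxX
  · calc f (c * x) ≤ (L + 1) * f x := ((div_lt_iff₀ hfx).1 (hX x hXx).1).le
      _ ≤ _ := by gcongr; exact le_max_left _ _
  · calc f (c * x) ≤ f (c * X) :=
        hf (one_le_mul_of_one_le_of_one_le hc hx) hcX (by gcongr)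
      _ = f (c * X) / f 1 * f 1 := (div_mul_cancel₀ _ (hf0 1 le_rfl).ne').symm
      _ ≤ f (c * X) / f 1 * f x := by
        gcongr
        · exact div_nonneg (hf0 _ hcX).le (hf0 1 le_rfl).le
        · exact hf self_mem_Ici hx hx
      _ ≤ _ := by gcongr; exact le_max_right _ _

lemma eventually_exp_neg_mul_rpow_le {K γ δ : ℝ} (hK : 0 < K) (hγ : 0 < γ) (hδ : 0 < δ) :
    ∀ᶠ R in atTop, Real.exp (-K * R ^ γ) ≤ R ^ (-δ) := by
  filter_upwards [(isLittleO_log_rpow_atTop hγ).bound (div_pos hK hδ), eventually_gt_atTop 0]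
    with R hlog hR
  rw [Real.norm_eq_abs, Real.norm_eq_abs, abs_of_pos (Real.rpow_pos_of_pos hR γ)] at hlog
  rw [Real.rpow_def_of_pos hR (-δ), Real.exp_le_exp]
  have := (le_abs_self _).trans hlog
  rw [div_mul_eq_mul_div, le_div_iff₀ hδ] at this
  linarith

lemma le_max_mul_rpow_neg {p B R R₀ δ : ℝ} (hR : 0 < R) (hδ : 0 ≤ δ) (hp : p ≤ 1)
    (hlarge : R₀ ≤ R → p ≤ B * R ^ (-δ)) : p ≤ max B (R₀ ^ δ) * R ^ (-δ) := by
  have hRδ : 0 ≤ R ^ (-δ) := Real.rpow_nonneg hR.le _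
  rcases le_or_gt R₀ R with h | h
  · exact (hlarge h).trans (by gcongr; exact le_max_left _ _)
  · calc p ≤ 1 := hp
      _ ≤ (R₀ / R) ^ δ := Real.one_le_rpow ((one_le_div hR).2 h.le) hδ
      _ = R₀ ^ δ * R ^ (-δ) := by
        rw [Real.div_rpow (by linarith) hR.le, Real.rpow_neg hR.le, div_eq_mul_inv]
      _ ≤ _ := by gcongr; exact le_max_right _ _

lemma exists_le_mul_rpow_of_le_rpow_add_exp {F : ℕ → ℝ → ℝ} {w : ℝ → ℝ}
    {M B K s₀ p δ : ℝ} (hK : 0 < K) (hδ : 0 < δ) (hδp : δ < p) (hw : ∀ x, 1 ≤ x → 0 < w x)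
    (hF1 : ∀ n x, F n x ≤ 1)
    (hF : ∀ (n : ℕ) (x t : ℝ), 1 ≤ x → M * w x ≤ t → s₀ ≤ n / t →
      F n x ≤ B * (w x / t) ^ p + Real.exp (-K * n / t)) :
    ∃ C : ℝ, ∀ n : ℕ, 1 ≤ n → ∀ x : ℝ, 1 ≤ x → F n x ≤ C * (w x / n) ^ δ := by
  have hp : 0 < p := hδ.trans hδp
  set θ := δ / p
  have hθ : 0 < θ := div_pos hδ hp
  have hθ1 : 0 < 1 - θ := by rw [sub_pos, div_lt_one hp]; linarith
  obtain ⟨R₀, hR₀⟩ := (((tendsto_rpow_atTop hθ).eventually_ge_atTop M).and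
    (((tendsto_rpow_atTop hθ1).eventually_ge_atTop s₀).and
      (eventually_exp_neg_mul_rpow_le hK hθ1 hδ))).exists_forall_of_atTop
  refine ⟨max (B + 1) (R₀ ^ δ), fun n hn x hx => ?_⟩
  have hwx := hw x hx
  set R := n / w x
  have hR : 0 < R := div_pos (by exact_mod_cast hn) hwx
  rw [← inv_div, Real.inv_rpow hR.le, ← Real.rpow_neg hR.le]
  refine le_max_mul_rpow_neg hR hδ.le (hF1 n x) fun hR₀R => ?_
  obtain ⟨hMR, hsR, hexpR⟩ := hR₀ R hR₀R
  have hnt : n / (w x * R ^ θ) = R ^ (1 - θ) := by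
    rw [Real.rpow_sub hR, Real.rpow_one, ← div_div]
  have hwt : (w x / (w x * R ^ θ)) ^ p = R ^ (-δ) := by
    rw [div_mul_cancel_left₀ hwx.ne', ← Real.rpow_neg hR.le, ← Real.rpow_mul hR.le,
      neg_mul, div_mul_cancel₀ δ hp.ne']
  calc F n x
      ≤ B * (w x / (w x * R ^ θ)) ^ p + Real.exp (-K * n / (w x * R ^ θ)) :=
        hF n x _ hx (by rw [mul_comm]; gcongr) (hnt ▸ hsR)
    _ = B * R ^ (-δ) + Real.exp (-K * R ^ (1 - θ)) := by rw [hwt, mul_div_assoc, hnt]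
    _ ≤ (B + 1) * R ^ (-δ) := by linarith

lemma setOf_neg_le_walkMin_subset {Ω : Type*} (ξ : ℕ → Ω → ℝ) (n : ℕ) (x y : ℝ) :
    {ω | -x ≤ walkMin ξ n ω} ⊆ hitsAboveBeforeBelow ξ x y ∪ {ω | reflMax ξ n ω ≤ x + y} := by
  intro ω hω
  have hmin : ∀ j ≤ n, -x ≤ walk ξ j ω := fun j hj =>
    hω.trans (Finset.inf'_le _ (Finset.mem_range.2 (Nat.lt_succ_of_le hj)))
  by_cases h : ∃ k ≤ n, y < walk ξ k ω
  · obtain ⟨k, hk, hyk⟩ := h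
    exact Or.inl ⟨k, hyk, fun j hj => hmin j (hj.trans hk)⟩
  · push Not at h
    refine Or.inr (show reflMax ξ n ω ≤ x + y from
      Finset.sup'_le _ _ fun v hv => Finset.sup'_le _ _ fun u hu => ?_)
    have hv' := Nat.lt_succ_iff.1 (Finset.mem_range.1 hv)
    have hu' := Nat.lt_succ_iff.1 (Finset.mem_range.1 hu)
    linarith [h v hv', hmin u (hu'.trans hv')]

lemma toReal_measure_neg_le_walkMin_le {Ω : Type*} [MeasurableSpace Ω] (P : Measure Ω)
    [IsFiniteMeasure P] (ξ : ℕ → Ω → ℝ) (ainv g : ℝ → ℝ) {C₁ x₀ r₀ K z₀ s₀ : ℝ}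
    (hΛ : ∀ x y : ℝ, x₀ ≤ x → r₀ ≤ y / x →
      (P (hitsAboveBeforeBelow ξ x y)).toReal ≤ C₁ * g (ainv x) / g (ainv (x + y)))
    (hV : ∀ z : ℝ, z₀ ≤ z → ∀ n : ℕ, s₀ ≤ (n : ℝ) / ainv z →
      (P {ω | reflMax ξ n ω ≤ z}).toReal ≤ Real.exp (-K * n / ainv z))
    {n : ℕ} {x z : ℝ} (hx : 0 < x) (hz₀ : z₀ ≤ z) (hzx : (1 + r₀) * max x x₀ ≤ z)
    (hzn : s₀ ≤ n / ainv z) :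
    (P {ω | -x ≤ walkMin ξ n ω}).toReal ≤
      C₁ * g (ainv (max x x₀)) / g (ainv z) + Real.exp (-K * n / ainv z) := by
  set x' := max x x₀
  have hx' : 0 < x' := hx.trans_le (le_max_left _ _)
  have hyx : r₀ ≤ (z - x') / x' := by rw [le_div_iff₀ hx']; linarith
  have hsub : {ω | -x ≤ walkMin ξ n ω} ⊆ {ω | -x' ≤ walkMin ξ n ω} := fun ω hω =>
    show -x' ≤ walkMin ξ n ω from (neg_le_neg (le_max_left x x₀)).trans hω
  calc (P {ω | -x ≤ walkMin ξ n ω}).toReal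
      ≤ (P (hitsAboveBeforeBelow ξ x' (z - x'))).toReal +
          (P {ω | reflMax ξ n ω ≤ x' + (z - x')}).toReal :=
        (measureReal_mono (hsub.trans (setOf_neg_le_walkMin_subset ξ n x' (z - x')))).trans
          (measureReal_union_le _ _)
    _ ≤ _ := by
      have hΛ' := hΛ x' (z - x') (le_max_right _ _) hyx
      rw [add_sub_cancel] at hΛ' ⊢
      exact add_le_add hΛ' (hV z hz₀ n hzn)

lemma nonneg_of_toReal_measure_le_mul_div {Ω : Type*} [MeasurableSpace Ω] {μ : Measure Ω}
    {s : Set Ω} {C u v : ℝ} (h : (μ s).toReal ≤ C * u / v) (hu : 0 < u) (hv : 0 < v) :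
    0 ≤ C :=
  nonneg_of_mul_nonneg_left (mul_div_assoc C u v ▸ measureReal_nonneg.trans h) (div_pos hu hv)

lemma exists_measure_stay_above_le_rpow_add_exp {Ω : Type*} [MeasurableSpace Ω]
    (P : Measure Ω) [IsFiniteMeasure P] (ξ : ℕ → Ω → ℝ) (a ainv : ℝ → ℝ) (α : ℝ)
    (ha_mono : StrictMonoOn a (Ici 1))
    (hainv_left : ∀ x : ℝ, 1 ≤ x → ainv (a x) = x)
    (hainv_right : ∀ y : ℝ, 1 ≤ y → a (ainv y) = y)
    (hainv_maps : ∀ y : ℝ, 1 ≤ y → 1 ≤ ainv y)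
    (hainv_rv : ∀ l : ℝ, 0 < l →
      Tendsto (fun x : ℝ => ainv (l * x) / ainv x) atTop (nhds (l ^ α)))
    (g : ℝ → ℝ) (q : ℝ) (hg_pos : ∀ x : ℝ, 1 ≤ x → 0 < g x)
    (hg_mono : ∀ x y : ℝ, 1 ≤ x → x ≤ y → g x ≤ g y)
    (hg_rv : ∀ l : ℝ, 0 < l → Tendsto (fun x : ℝ => g (l * x) / g x) atTop (nhds (l ^ q)))
    (C₁ x₀ r₀ : ℝ) (hx₀ : 1 ≤ x₀) (hr₀ : 0 ≤ r₀)
    (hΛ : ∀ x y : ℝ, x₀ ≤ x → r₀ ≤ y / x →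
      (P (hitsAboveBeforeBelow ξ x y)).toReal ≤ C₁ * g (ainv x) / g (ainv (x + y)))
    (K z₀ s₀ : ℝ) (hz₀ : 1 ≤ z₀)
    (hV : ∀ z : ℝ, z₀ ≤ z → ∀ n : ℕ, s₀ ≤ (n : ℝ) / ainv z →
      (P {ω | reflMax ξ n ω ≤ z}).toReal ≤ Real.exp (-K * n / ainv z))
    {p : ℝ} (hp : 0 ≤ p) (hpq : p < q) :
    ∃ M B : ℝ, ∀ (n : ℕ) (x t : ℝ), 1 ≤ x → M * ainv x ≤ t → s₀ ≤ n / t →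
      (P {ω | -x ≤ walkMin ξ n ω}).toReal ≤ B * (ainv x / t) ^ p + Real.exp (-K * n / t) := by
  have hainv_mono : MonotoneOn ainv (Ici 1) :=
    ha_mono.monotoneOn_of_rightInvOn (fun y hy => hainv_maps y hy) (fun y hy => hainv_right y hy)
  have hle_a : ∀ y t, 1 ≤ y → ainv y ≤ t → y ≤ a t := fun y t hy h =>
    hainv_right y hy ▸ ha_mono.monotoneOn (hainv_maps y hy) ((hainv_maps y hy).trans h) h
  have hC₁ : 0 ≤ C₁ := nonneg_of_toReal_measure_le_mul_div
    (hΛ x₀ (r₀ * x₀) le_rfl (by field_simp; rfl))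
    (hg_pos _ (hainv_maps _ hx₀)) (hg_pos _ (hainv_maps _ (by nlinarith)))
  obtain ⟨Cg, hCg0, hCg⟩ := exists_le_mul_rpow_mul_of_tendsto one_lt_two hp hpq hg_pos
    (fun x hx y _ hxy => hg_mono x y hx hxy) (hg_rv 2 two_pos)
  set c := (1 + r₀) * x₀
  obtain ⟨C₃, hC₃0, hC₃⟩ := exists_le_mul_of_tendsto_div (c := c) (by nlinarith)
    (fun x hx => one_pos.trans_le (hainv_maps x hx)) hainv_mono (hainv_rv c (by positivity))
  refine ⟨max (ainv z₀) C₃, C₁ * Cg * C₃ ^ p, fun n x t hx ht hnt => ?_⟩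
  have hw := hainv_maps x hx
  have hz₀t : ainv z₀ ≤ t :=
    (le_mul_of_one_le_right (by linarith [hainv_maps z₀ hz₀]) hw).trans
      ((mul_le_mul_of_nonneg_right (le_max_left _ _) (by linarith)).trans ht)
  have hC₃t : C₃ * ainv x ≤ t :=
    (mul_le_mul_of_nonneg_right (le_max_right _ _) (by linarith)).trans ht
  have ht1 : 1 ≤ t := (hainv_maps z₀ hz₀).trans hz₀t
  have hx' : 1 ≤ max x x₀ := hx.trans (le_max_left _ _)
  have hcx : (1 + r₀) * max x x₀ ≤ c * x := by
    rw [mul_assoc]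
    gcongr
    exact max_le (le_mul_of_one_le_left (by linarith) hx₀)
      (le_mul_of_one_le_right (by linarith) hx)
  have hxc : max x x₀ ≤ c * x := (le_mul_of_one_le_left (by linarith) (by linarith)).trans hcx
  have hu : ainv (max x x₀) ≤ C₃ * ainv x :=
    (hainv_mono hx' (hx'.trans hxc) hxc).trans (hC₃ x hx)
  have key := toReal_measure_neg_le_walkMin_le P ξ ainv g hΛ hV (n := n) (by linarith)
    (hle_a z₀ t hz₀ hz₀t) (hcx.trans (hle_a (c * x) t (hx'.trans hxc) ((hC₃ x hx).trans hC₃t)))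
    (by rwa [hainv_left t ht1])
  rw [hainv_left t ht1] at key
  refine key.trans (add_le_add_left ?_ _)
  calc C₁ * g (ainv (max x x₀)) / g t
      ≤ C₁ * (Cg * (ainv (max x x₀) / t) ^ p) := by
        rw [mul_div_assoc]
        gcongr
        rw [div_le_iff₀ (hg_pos t ht1)]
        exact hCg _ _ (hainv_maps _ hx') (hu.trans hC₃t)
    _ ≤ C₁ * (Cg * (C₃ * ainv x / t) ^ p) := by
        gcongr
        exact div_nonneg (zero_le_one.trans (hainv_maps _ hx')) (by linarith)
    _ = C₁ * Cg * C₃ ^ p * (ainv x / t) ^ p := by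
        rw [mul_div_assoc, Real.mul_rpow hC₃0.le (by positivity)]
        ring

theorem walkMin_stay_above_bound_general
    {Ω : Type*} [MeasurableSpace Ω] (P : Measure Ω) [IsProbabilityMeasure P]
    (ξ : ℕ → Ω → ℝ)
    (a ainv : ℝ → ℝ) (α : ℝ)
    (ha_mono : StrictMonoOn a (Set.Ici 1))
    (hainv_left : ∀ x : ℝ, 1 ≤ x → ainv (a x) = x)
    (hainv_right : ∀ y : ℝ, 1 ≤ y → a (ainv y) = y)
    (hainv_maps : ∀ y : ℝ, 1 ≤ y → 1 ≤ ainv y)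
    (hainv_rv : ∀ l : ℝ, 0 < l →
      Tendsto (fun x : ℝ => ainv (l * x) / ainv x) atTop (nhds (l ^ α)))
    (g : ℝ → ℝ) (q : ℝ)
    (hg_pos : ∀ x : ℝ, 1 ≤ x → 0 < g x)
    (hg_mono : ∀ x y : ℝ, 1 ≤ x → x ≤ y → g x ≤ g y)
    (hg_rv : ∀ l : ℝ, 0 < l →
      Tendsto (fun x : ℝ => g (l * x) / g x) atTop (nhds (l ^ q)))
    (C₁ x₀ r₀ : ℝ) (hx₀ : 1 ≤ x₀) (hr₀ : 1 ≤ r₀)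
    (hΛ : ∀ x y : ℝ, x₀ ≤ x → r₀ ≤ y / x →
      (P (hitsAboveBeforeBelow ξ x y)).toReal ≤ C₁ * g (ainv x) / g (ainv (x + y)))
    (K z₀ s₀ : ℝ) (hK : 0 < K) (hz₀ : 1 ≤ z₀)
    (hV : ∀ z : ℝ, z₀ ≤ z → ∀ n : ℕ, s₀ ≤ (n : ℝ) / ainv z →
      (P {ω | reflMax ξ n ω ≤ z}).toReal ≤ Real.exp (-K * n / ainv z)) :
    ∀ δ : ℝ, 0 < δ → δ < q →
      ∃ Cδ : ℝ, ∀ n : ℕ, 1 ≤ n → ∀ x : ℝ, 1 ≤ x →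
        (P {ω | -x ≤ walkMin ξ n ω}).toReal ≤ Cδ * (ainv x / n) ^ δ := by
  intro δ hδ hδq
  obtain ⟨p, hδp, hpq⟩ := exists_between hδq
  obtain ⟨M, B, hMB⟩ := exists_measure_stay_above_le_rpow_add_exp P ξ a ainv α ha_mono
    hainv_left hainv_right hainv_maps hainv_rv g q hg_pos hg_mono hg_rv C₁ x₀ r₀ hx₀
    (by linarith) hΛ K z₀ s₀ hz₀ hV (hδ.trans hδp).le hpq
  exact exists_le_mul_rpow_of_le_rpow_add_exp hK hδ hδp
    (fun x hx => one_pos.trans_le (hainv_maps x hx)) (fun _ _ => measureReal_le_one) hMB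

/-- Let `a : [1,∞) → [1,∞)` be continuous, strictly increasing,
unbounded, `a(1) = 1`, with inverse `a⁻¹` regularly varying with index `α > 0`, and let
`g` be nondecreasing, positive and regularly varying with index `q ∈ (0,1]`.  Assume
(i) `P(Λ(x,y)) ≤ C₁ g(a⁻¹(x))/g(a⁻¹(x+y))` for `x ≥ x₀`, `y/x ≥ r₀`, and
(ii) `P(V^#_n ≤ z) ≤ exp(-K n / a⁻¹(z))` for `z ≥ z₀`, `n / a⁻¹(z) ≥ s₀`.
Then for every `0 < δ < q` there is `C_δ` such that for all `n ≥ 1`, `x ≥ 1`: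
`P(min_{0≤k≤n} S_k ≥ -x) ≤ C_δ (a⁻¹(x)/n)^δ`. -/
theorem walkMin_stay_above_bound
    {Ω : Type*} [MeasurableSpace Ω] (P : Measure Ω) [IsProbabilityMeasure P]
    (ξ : ℕ → Ω → ℝ) (hmeas : ∀ i, Measurable (ξ i))
    (hindep : iIndepFun ξ P)
    (hident : ∀ i, IdentDistrib (ξ i) (ξ 0) P P)
    (a ainv : ℝ → ℝ) (α : ℝ) (hα : 0 < α)
    (ha_cont : ContinuousOn a (Set.Ici 1))
    (ha_mono : StrictMonoOn a (Set.Ici 1))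
    (ha_top : Tendsto a atTop atTop)
    (ha_one : a 1 = 1)
    (ha_maps : ∀ x : ℝ, 1 ≤ x → 1 ≤ a x)
    (hainv_left : ∀ x : ℝ, 1 ≤ x → ainv (a x) = x)
    (hainv_right : ∀ y : ℝ, 1 ≤ y → a (ainv y) = y)
    (hainv_maps : ∀ y : ℝ, 1 ≤ y → 1 ≤ ainv y)
    (hainv_rv : ∀ l : ℝ, 0 < l →
      Tendsto (fun x : ℝ => ainv (l * x) / ainv x) atTop (nhds (l ^ α)))
    (g : ℝ → ℝ) (q : ℝ) (hq0 : 0 < q) (hq1 : q ≤ 1)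
    (hg_pos : ∀ x : ℝ, 1 ≤ x → 0 < g x)
    (hg_mono : ∀ x y : ℝ, 1 ≤ x → x ≤ y → g x ≤ g y)
    (hg_rv : ∀ l : ℝ, 0 < l →
      Tendsto (fun x : ℝ => g (l * x) / g x) atTop (nhds (l ^ q)))
    (C₁ x₀ r₀ : ℝ) (hx₀ : 1 ≤ x₀) (hr₀ : 1 ≤ r₀)
    (hΛ : ∀ x y : ℝ, x₀ ≤ x → r₀ ≤ y / x →
      (P (hitsAboveBeforeBelow ξ x y)).toReal ≤ C₁ * g (ainv x) / g (ainv (x + y)))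
    (K z₀ s₀ : ℝ) (hK : 0 < K) (hz₀ : 1 ≤ z₀) (hs₀ : 1 ≤ s₀)
    (hV : ∀ z : ℝ, z₀ ≤ z → ∀ n : ℕ, s₀ ≤ (n : ℝ) / ainv z →
      (P {ω | reflMax ξ n ω ≤ z}).toReal ≤ Real.exp (-K * n / ainv z)) :
    ∀ δ : ℝ, 0 < δ → δ < q →
      ∃ Cδ : ℝ, ∀ n : ℕ, 1 ≤ n → ∀ x : ℝ, 1 ≤ x →
        (P {ω | -x ≤ walkMin ξ n ω}).toReal ≤ Cδ * (ainv x / n) ^ δ :=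
  walkMin_stay_above_bound_general P ξ a ainv α ha_mono hainv_left hainv_right hainv_maps hainv_rv g
    q hg_pos hg_mono hg_rv C₁ x₀ r₀ hx₀ hr₀ hΛ K z₀ s₀ hK hz₀ hV
end
end
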